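/- arXiv:2206.11361 — 4 statements merged into one kernel-verified Lean document; each statement's English description precedes it below -/
import Mathlib

section
/- For any real number a > 0, the function z ↦ Γ(z+a)/Γ(z) is non-decreasing on (0, ∞), i.e., for all 0 < z₁ ≤ z₂ one has Γ(z₁+a)/Γ(z₁) ≤ Γ(z₂+a)/Γ(z₂). -/
/-!
`log ∘ Γ` is convex on `(0, ∞)` (Bohr–Mollerup), and the increments `f (x + a) - f x` of a convex
function are nondecreasing in `x`, being squeezed between the slopes over `[x, x + a]`,
`[x, y + a]` and `[y, y + a]`. Taking `f = log ∘ Γ` and exponentiating gives the claim.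
-/

open Set

theorem ConvexOn.map_add_sub_map_le {𝕜 : Type*} [Field 𝕜] [LinearOrder 𝕜] [IsStrictOrderedRing 𝕜]
    {s : Set 𝕜} {f : 𝕜 → 𝕜} (hf : ConvexOn 𝕜 s f) {a x y : 𝕜} (ha : 0 ≤ a) (hx : x ∈ s)
    (hya : y + a ∈ s) (hxy : x ≤ y) : f (x + a) - f x ≤ f (y + a) - f y := by
  rcases ha.eq_or_lt with rfl | ha
  · simp
  have hxa : x + a ∈ s := hf.1.ordConnected.out hx hya ⟨by linarith, by linarith⟩
  have hy : y ∈ s := hf.1.ordConnected.out hx hya ⟨hxy, by linarith⟩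
  have h₁ : slope f x (x + a) ≤ slope f x (y + a) :=
    hf.slope_mono hx ⟨hxa, (lt_add_of_pos_right x ha).ne'⟩ ⟨hya, (by linarith : x < y + a).ne'⟩
      (by linarith)
  have h₂ : slope f (y + a) x ≤ slope f (y + a) y :=
    hf.slope_mono hya ⟨hx, (by linarith : x < y + a).ne⟩ ⟨hy, (lt_add_of_pos_right y ha).ne⟩ hxy
  rw [slope_comm f (y + a) x, slope_comm f (y + a) y] at h₂
  have h := h₁.trans h₂
  simp only [slope_def_field, add_sub_cancel_left] at h
  exact (div_le_div_iff_of_pos_right ha).mp h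

theorem gamma_ratio_monotone (a : ℝ) (ha : 0 < a) :
    ∀ z₁ z₂ : ℝ, 0 < z₁ → z₁ ≤ z₂ →
      Real.Gamma (z₁ + a) / Real.Gamma z₁ ≤ Real.Gamma (z₂ + a) / Real.Gamma z₂ := by
  intro z₁ z₂ hz₁ hz
  have hΓ {z : ℝ} (hz : 0 < z) : 0 < Real.Gamma z := Real.Gamma_pos_of_pos hz
  have hz₂ : 0 < z₂ := hz₁.trans_le hz
  rw [← Real.log_le_log_iff (div_pos (hΓ (by linarith)) (hΓ hz₁))
    (div_pos (hΓ (by linarith)) (hΓ hz₂)), Real.log_div (hΓ (by linarith)).ne' (hΓ hz₁).ne',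
    Real.log_div (hΓ (by linarith)).ne' (hΓ hz₂).ne']
  exact Real.convexOn_log_Gamma.map_add_sub_map_le ha.le hz₁
    (show z₂ + a ∈ Ioi 0 by rw [mem_Ioi]; linarith) hz
end

section
/- Let n ≥ 2 and let A_n be the set of exponent vectors appearing in the expansion x₁ ∏_{k=2}^n (x_k + x_{k-1}) = Σ_{a ∈ A_n} ∏_j x_j^{a_j}. Then every a ∈ A_n satisfies a_i + a_{i+1} ∈ {1,2,3} for i = 2,…,n-2, a₁ + a₂ ∈ {2,3}, and a_{n-1} + a_n ∈ {1,2}. -/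
/-- The recursively-defined sets of exponent vectors, as lists:
`A 2 = {[2,0],[1,1]}`, and `A (n+1)` is obtained from `A n` by, for each `a ∈ A n`,
including both `a` with last entry incremented followed by `0`, and `a ++ [1]`. -/
def expA : ℕ → Finset (List ℕ)
  | 0 => ∅
  | 1 => ∅
  | 2 => {[2, 0], [1, 1]}
  | (n + 3) =>
      (expA (n + 2)).image (fun a => a.dropLast ++ [a.getLastD 0 + 1, 0]) ∪
      (expA (n + 2)).image (fun a => a ++ [1])

/-!
Both steps of the recursion only change the last entry and append a new one, so it suffices to
propagate an invariant: every adjacent sum lies in `[1, 3]`, the first one is at least `2`, the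
last one is at most `2`, and the last entry is at most `1`. Incrementing the last entry `x ≤ 1`
and appending `0` turns the last sum `s ∈ [1, 2]` into `s + 1 ∈ [2, 3]` and creates the new last
sum `x + 1 ∈ [1, 2]`; appending `1` just creates the new last sum `x + 1`.
-/

structure PairSumBounds (n : ℕ) (a : List ℕ) : Prop where
  length_eq : a.length = n + 2
  getD_last_le_one : a.getD (n + 1) 0 ≤ 1
  pair_sum_bounds : ∀ i ≤ n, 1 ≤ a.getD i 0 + a.getD (i + 1) 0 ∧ a.getD i 0 + a.getD (i + 1) 0 ≤ 3
  two_le_first_pair_sum : 2 ≤ a.getD 0 0 + a.getD 1 0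
  last_pair_sum_le_two : a.getD n 0 + a.getD (n + 1) 0 ≤ 2

namespace PairSumBounds

variable {n : ℕ} {a : List ℕ}

theorem incr_last_append_zero (h : PairSumBounds n a) :
    PairSumBounds (n + 1) (a.dropLast ++ [a.getLastD 0 + 1, 0]) := by
  obtain ⟨b, x, rfl⟩ := (List.eq_nil_or_concat' a).resolve_left
    (List.ne_nil_of_length_pos (by simp [h.length_eq]))
  have hb : b.length = n + 1 := by simpa using h.length_eq
  have hlow : ∀ i ≤ n, (b ++ [x + 1, 0]).getD i 0 = (b ++ [x]).getD i 0 := fun i hi => by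
    rw [List.getD_append _ _ _ _ (by omega), List.getD_append _ _ _ _ (by omega)]
  have hx : (b ++ [x]).getD (n + 1) 0 = x := by
    rw [List.getD_append_right _ _ _ _ (by omega), hb]; simp
  have hincr : (b ++ [x + 1, 0]).getD (n + 1) 0 = x + 1 := by
    rw [List.getD_append_right _ _ _ _ (by omega), hb]; simp
  have hzero : (b ++ [x + 1, 0]).getD (n + 1 + 1) 0 = 0 := by
    rw [List.getD_append_right _ _ _ _ (by omega), hb]; simp
  have hx_le := h.getD_last_le_one
  have hlast_pair := h.last_pair_sum_le_two
  have hlast_pos := (h.pair_sum_bounds n le_rfl).1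
  rw [hx] at hx_le hlast_pair hlast_pos
  rw [List.dropLast_concat, List.getLastD_concat]
  refine ⟨by simp [hb], by omega, fun i hi => ?_, ?_, by omega⟩
  · obtain hi | rfl | rfl : i < n ∨ n = i ∨ n + 1 = i := by omega
    · rw [hlow i hi.le, hlow (i + 1) hi]
      exact h.pair_sum_bounds i hi.le
    · rw [hlow n le_rfl, hincr]
      omega
    · rw [hincr, hzero]
      omega
  · rcases n.eq_zero_or_pos with rfl | hpos
    · rw [hlow 0 le_rfl, hincr]
      omega
    · rw [hlow 0 (by omega), hlow 1 hpos]
      exact h.two_le_first_pair_sum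

theorem append_one (h : PairSumBounds n a) : PairSumBounds (n + 1) (a ++ [1]) := by
  have hlow : ∀ i ≤ n + 1, (a ++ [1]).getD i 0 = a.getD i 0 := fun i hi =>
    List.getD_append _ _ _ _ (by rw [h.length_eq]; omega)
  have h1 : (a ++ [1]).getD (n + 1 + 1) 0 = 1 := by
    rw [List.getD_append_right _ _ _ _ h.length_eq.le, h.length_eq]; simp
  have hlast := h.getD_last_le_one
  refine ⟨by simp [h.length_eq], h1.le, fun i hi => ?_, ?_, ?_⟩
  · obtain hi | rfl : i ≤ n ∨ n + 1 = i := by omega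
    · rw [hlow i (by omega), hlow (i + 1) (by omega)]
      exact h.pair_sum_bounds i hi
    · rw [hlow (n + 1) le_rfl, h1]
      omega
  · rw [hlow 0 (by omega), hlow 1 (by omega)]
    exact h.two_le_first_pair_sum
  · rw [hlow (n + 1) le_rfl, h1]
    omega

end PairSumBounds

theorem two_le_of_mem_expA {n : ℕ} {a : List ℕ} (ha : a ∈ expA n) : 2 ≤ n := by
  rcases n with _ | _ | n
  · simp [expA] at ha
  · simp [expA] at ha
  · omega

theorem pairSumBounds_of_mem_expA {n : ℕ} {a : List ℕ} (ha : a ∈ expA (n + 2)) :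
    PairSumBounds n a := by
  induction n generalizing a with
  | zero =>
    simp only [expA, Finset.mem_insert, Finset.mem_singleton] at ha
    rcases ha with rfl | rfl <;> exact ⟨rfl, by decide, by decide, by decide, by decide⟩
  | succ n ih =>
    rw [expA, Finset.mem_union, Finset.mem_image, Finset.mem_image] at ha
    rcases ha with ⟨b, hb, rfl⟩ | ⟨b, hb, rfl⟩
    exacts [(ih hb).incr_last_append_zero, (ih hb).append_one]

theorem pair_sum_constraints_general (n : ℕ) (a : List ℕ) (ha : a ∈ expA n) :
    (∀ i, 2 ≤ i → i ≤ n - 2 →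
      (a.getD (i - 1) 0 + a.getD i 0 = 1 ∨ a.getD (i - 1) 0 + a.getD i 0 = 2 ∨
        a.getD (i - 1) 0 + a.getD i 0 = 3)) ∧
    (a.getD 0 0 + a.getD 1 0 = 2 ∨ a.getD 0 0 + a.getD 1 0 = 3) ∧
    (a.getD (n - 2) 0 + a.getD (n - 1) 0 = 1 ∨ a.getD (n - 2) 0 + a.getD (n - 1) 0 = 2) := by
  obtain ⟨m, rfl⟩ := Nat.exists_eq_add_of_le' (two_le_of_mem_expA ha)
  have h := pairSumBounds_of_mem_expA ha
  refine ⟨fun i hi₁ hi₂ => ?_, ?_, ?_⟩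
  · have := h.pair_sum_bounds (i - 1) (by omega)
    rw [Nat.sub_add_cancel (by omega)] at this
    omega
  · have hle := (h.pair_sum_bounds 0 (Nat.zero_le m)).2
    rw [zero_add] at hle
    have := h.two_le_first_pair_sum
    omega
  · have := (h.pair_sum_bounds m le_rfl).1
    have := h.last_pair_sum_le_two
    rw [show m + 2 - 2 = m by omega, show m + 2 - 1 = m + 1 by omega]
    omega

theorem pair_sum_constraints (n : ℕ) (hn : 2 ≤ n) (a : List ℕ) (ha : a ∈ expA n) :
    (∀ i, 2 ≤ i → i ≤ n - 2 →
      (a.getD (i - 1) 0 + a.getD i 0 = 1 ∨ a.getD (i - 1) 0 + a.getD i 0 = 2 ∨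
        a.getD (i - 1) 0 + a.getD i 0 = 3)) ∧
    (a.getD 0 0 + a.getD 1 0 = 2 ∨ a.getD 0 0 + a.getD 1 0 = 3) ∧
    (a.getD (n - 2) 0 + a.getD (n - 1) 0 = 1 ∨ a.getD (n - 2) 0 + a.getD (n - 1) 0 = 2) :=
  pair_sum_constraints_general n a ha
end

section
/- For any a > 0 there exist constants C > 0 and c > 0 (depending on a) such that for all x > 0, Σ_{n≥0} x^n/(n!)^a ≤ C · exp(c · x^{1/a}). -/
/-! With `y = x ^ (1 / a)` the `n`-th term is `2 ^ (-a n) ((2 y) ^ n / n!) ^ a`, and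
`(2 y) ^ n / n! ≤ exp (2 y)` because it is a single term of the exponential series. Hence the
series is dominated by `exp (2 a y)` times the geometric series of ratio `2 ^ (-a) < 1`. -/

open Real Nat

lemma tsum_le_of_le_geometric_mul {f : ℕ → ℝ} {r M : ℝ} (hf : ∀ n, 0 ≤ f n)
    (hr₀ : 0 ≤ r) (hr₁ : r < 1) (h : ∀ n, f n ≤ r ^ n * M) : ∑' n, f n ≤ (1 - r)⁻¹ * M := by
  have hgeom : Summable fun n ↦ r ^ n * M :=
    (summable_geometric_of_lt_one hr₀ hr₁).mul_right M
  calc ∑' n, f n ≤ ∑' n, r ^ n * M := (hgeom.of_nonneg_of_le hf h).tsum_le_tsum h hgeom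
    _ = (1 - r)⁻¹ * M := by rw [tsum_mul_right, tsum_geometric_of_lt_one hr₀ hr₁]

namespace Real

lemma rpow_pow_div_factorial_rpow_le_exp {y a : ℝ} (hy : 0 ≤ y) (ha : 0 ≤ a) (n : ℕ) :
    (y ^ a) ^ n / (n ! : ℝ) ^ a ≤ exp (a * y) :=
  calc (y ^ a) ^ n / (n ! : ℝ) ^ a = (y ^ n / n !) ^ a := by
        rw [div_rpow (by positivity) (by positivity), ← rpow_natCast, ← rpow_mul hy, mul_comm,
          rpow_mul hy, rpow_natCast]
    _ ≤ exp y ^ a := rpow_le_rpow (by positivity) (pow_div_factorial_le_exp y hy n) ha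
    _ = exp (a * y) := by rw [← exp_mul, mul_comm]

lemma pow_div_factorial_rpow_le {x a s : ℝ} (hx : 0 ≤ x) (ha : 0 < a) (hs : 0 < s) (n : ℕ) :
    x ^ n / (n ! : ℝ) ^ a ≤ (s ^ (-a)) ^ n * exp (a * (s * x ^ (1 / a))) := by
  have hsx : (s * x ^ (1 / a)) ^ a = s ^ a * x := by
    rw [mul_rpow hs.le (by positivity), ← rpow_mul hx, one_div_mul_cancel ha.ne', rpow_one]
  have hx_eq : x = s ^ (-a) * (s * x ^ (1 / a)) ^ a := by
    rw [hsx, ← mul_assoc, ← rpow_add hs, neg_add_cancel, rpow_zero, one_mul]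
  calc x ^ n / (n ! : ℝ) ^ a
        = (s ^ (-a)) ^ n * (((s * x ^ (1 / a)) ^ a) ^ n / (n ! : ℝ) ^ a) := by
        rw [mul_div_assoc', ← mul_pow, ← hx_eq]
    _ ≤ (s ^ (-a)) ^ n * exp (a * (s * x ^ (1 / a))) := by
        gcongr
        exact rpow_pow_div_factorial_rpow_le_exp (by positivity) ha.le n

end Real

theorem mittag_leffler_bound (a : ℝ) (ha : 0 < a) :
    ∃ C > (0 : ℝ), ∃ c > (0 : ℝ), ∀ x : ℝ, 0 < x →
      ∑' n : ℕ, x ^ n / (n.factorial : ℝ) ^ a ≤ C * Real.exp (c * x ^ (1 / a)) := by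
  have hr₁ : (2 : ℝ) ^ (-a) < 1 := rpow_lt_one_of_one_lt_of_neg one_lt_two (neg_lt_zero.mpr ha)
  refine ⟨(1 - 2 ^ (-a))⁻¹, inv_pos.mpr (sub_pos.mpr hr₁), a * 2, by positivity,
    fun x hx ↦ ?_⟩
  rw [mul_assoc a]
  exact tsum_le_of_le_geometric_mul (fun n ↦ by positivity) (by positivity) hr₁
    (pow_div_factorial_rpow_le hx.le ha two_pos)
end

section
/- Let 1/2 < H₀ < 1 and 0 < H < 1/2 with H₀ + H > 3/4. Define, for an exponent vector a ∈ {0,1,2}^n with partial sums Σ_{j=1}^i a_j ∈ {i, i+1} for i < n and Σ_{j=1}^n a_j = n, and α_j = (1-2H)a_j, the quantities α̃₁ = (4H - 3 + α₁)/(4H₀), α̃_j = (4H - 2 + α_{j-1} + α_j)/(4H₀) for 2 ≤ j ≤ n, and β̃_j = -(α_j + 1)/(4H₀). Then α̃₁ > -1, β̃_j > -1 for all j, and Σ_{i=1}^k (α̃_i + β̃_i) + k + 1 + α̃_{k+1} > 0 for all k = 1,…,n-1. -/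
/-!
Every condition is a bound of the form `-1 < N / (4 H₀)`, i.e. `0 < N + 4 H₀`, and follows from
`0 ≤ αⱼ ≤ 2 - 4H` together with `4 H₀ + 4 H > 3`. For the partial-sum conditions, regroup
`∑_{i ≤ k} (α̃ᵢ + β̃ᵢ) + k + 1 + α̃_{k+1}` as `(1 + α̃₁) + ∑_{i ≤ k} (1 + β̃ᵢ + α̃_{i+1})`:
in each bracket `αᵢ` cancels, leaving `(4 H₀ + 4 H - 3 + α_{i+1}) / (4 H₀) > 0`.
-/

open Finset

lemma sum_Icc_add_add_eq_add_sum_shift {R : Type*} [CommRing R] (f g : ℕ → R) (k : ℕ) :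
    ∑ i ∈ Icc 1 k, (f i + g i) + k + 1 + f (k + 1) =
      (1 + f 1) + ∑ i ∈ Icc 1 k, (1 + g i + f (i + 1)) := by
  induction k with
  | zero => simp
  | succ k ih =>
    rw [sum_Icc_succ_top (by omega), sum_Icc_succ_top (by omega)]
    push_cast
    linear_combination ih

lemma sum_Icc_add_add_pos {f g : ℕ → ℝ} (h₁ : -1 < f 1)
    (h : ∀ i, 1 ≤ i → 0 < 1 + g i + f (i + 1)) (k : ℕ) :
    0 < ∑ i ∈ Icc 1 k, (f i + g i) + k + 1 + f (k + 1) := by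
  rw [sum_Icc_add_add_eq_add_sum_shift]
  have := sum_nonneg fun i (hi : i ∈ Icc 1 k) => (h i (mem_Icc.1 hi).1).le
  linarith

theorem integrability_conditions_general (H₀ H : ℝ) (hH₀ : 1 / 2 < H₀)
    (hH1 : H < 1 / 2) (hsum : 3 / 4 < H₀ + H)
    (n : ℕ) (a : ℕ → ℕ) (ha2 : ∀ j, 1 ≤ j → j ≤ n → a j ≤ 2) :
    let α : ℕ → ℝ := fun j => (1 - 2 * H) * a j
    let αt : ℕ → ℝ := fun j =>
      if j = 1 then (4 * H - 3 + α 1) / (4 * H₀)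
      else (4 * H - 2 + α (j - 1) + α j) / (4 * H₀)
    let βt : ℕ → ℝ := fun j => -(α j + 1) / (4 * H₀)
    (-1 < αt 1) ∧ (∀ j, 1 ≤ j → j ≤ n → -1 < βt j) ∧
      (∀ k, 1 ≤ k → k ≤ n - 1 →
        0 < (∑ i ∈ Finset.Icc 1 k, (αt i + βt i)) + k + 1 + αt (k + 1)) := by
  intro α αt βt
  have h4H₀ : 0 < 4 * H₀ := by linarith
  have hα_nonneg (j : ℕ) : 0 ≤ α j := mul_nonneg (by linarith) (Nat.cast_nonneg _)
  have hαt_one : -1 < αt 1 := by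
    rw [show αt 1 = (4 * H - 3 + α 1) / (4 * H₀) from if_pos rfl, lt_div_iff₀ h4H₀]
    linarith [hα_nonneg 1]
  refine ⟨hαt_one, fun j hj1 hjn => ?_, fun k _ _ => sum_Icc_add_add_pos hαt_one (fun i hi => ?_) k⟩
  · have haj : (a j : ℝ) ≤ 2 := by exact_mod_cast ha2 j hj1 hjn
    have hαj : α j ≤ (1 - 2 * H) * 2 := mul_le_mul_of_nonneg_left haj (by linarith)
    rw [show βt j = -(α j + 1) / (4 * H₀) from rfl, lt_div_iff₀ h4H₀]
    linarith
  · have hαt_succ : αt (i + 1) = (4 * H - 2 + α i + α (i + 1)) / (4 * H₀) := by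
      simp only [αt, Nat.add_sub_cancel, if_neg (by omega : i + 1 ≠ 1)]
    have hpos : 0 < (4 * H₀ + 4 * H - 3 + α (i + 1)) / (4 * H₀) :=
      div_pos (by linarith [hα_nonneg (i + 1)]) h4H₀
    convert hpos using 1
    rw [hαt_succ, show βt i = -(α i + 1) / (4 * H₀) from rfl]
    field_simp
    ring

theorem integrability_conditions (H₀ H : ℝ) (hH₀ : 1 / 2 < H₀) (hH₀1 : H₀ < 1)
    (hH : 0 < H) (hH1 : H < 1 / 2) (hsum : 3 / 4 < H₀ + H)
    (n : ℕ) (hn : 1 ≤ n) (a : ℕ → ℕ) (ha2 : ∀ j, 1 ≤ j → j ≤ n → a j ≤ 2)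
    (hpartial : ∀ i, 1 ≤ i → i < n →
      (∑ j ∈ Finset.Icc 1 i, a j = i ∨ ∑ j ∈ Finset.Icc 1 i, a j = i + 1))
    (htotal : ∑ j ∈ Finset.Icc 1 n, a j = n) :
    let α : ℕ → ℝ := fun j => (1 - 2 * H) * a j
    let αt : ℕ → ℝ := fun j =>
      if j = 1 then (4 * H - 3 + α 1) / (4 * H₀)
      else (4 * H - 2 + α (j - 1) + α j) / (4 * H₀)
    let βt : ℕ → ℝ := fun j => -(α j + 1) / (4 * H₀)
    (-1 < αt 1) ∧ (∀ j, 1 ≤ j → j ≤ n → -1 < βt j) ∧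
      (∀ k, 1 ≤ k → k ≤ n - 1 →
        0 < (∑ i ∈ Finset.Icc 1 k, (αt i + βt i)) + k + 1 + αt (k + 1)) :=
  integrability_conditions_general H₀ H hH₀ hH1 hsum n a ha2
end
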